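/- Let Ω ⊂ ℝ² be open and bounded, let H be a C¹ real-valued function on a neighborhood of cl(Ω) and set b = (∂H/∂x₂, −∂H/∂x₁). Let λ, ε, ν > 0, M ≥ 0, and g : ∂Ω → ℝ continuous. Let u : cl(Ω) → ℝ be bounded, upper semicontinuous, and a viscosity subsolution of λu − ε⁻¹ b·Du + ν|Du| − M = 0 in Ω together with the Dirichlet condition u = g on ∂Ω in the viscosity sense (that is: in the interior, λu(z) − ε⁻¹ b(z)·Dφ(z) + ν|Dφ(z)| − M ≤ 0 at every local maximum point z ∈ Ω of u − φ with φ ∈ C¹; and at every local maximum point z ∈ ∂Ω of u − φ with φ ∈ C¹(cl(Ω)), min{λu(z) − ε⁻¹ b(z)·Dφ(z) + ν|Dφ(z)| − M, u(z) − g(z)} ≤ 0). Let y ∈ ∂Ω and suppose there exist r > 0 and h̄ ∈ ℝ such that H(y) = h̄, H(x) < h̄ for all x ∈ B_r(y) ∩ Ω, and inf{|DH(x)| : x ∈ B_r(y) ∩ cl(Ω)} > 0. Then u(y) ≤ g(y). -/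

import Mathlib

/-!
Test `u` at `y` against `φ = K (h̄ - H + |x - y|²)`, with `H` first cut off to a globally
`C¹` function. Since `H ≤ h̄` on `cl Ω` near `y`, `φ ≥ K |x - y|²` there, so for `K` large
the maximum `z` of `u - φ` over `cl Ω ∩ B̄ₘ(y)` lies in the open ball: it is a local maximum
on `cl Ω` with `u y ≤ u z`. At `z`, `Dφ = K (2 (z - y) - DH)` and `b · DH = 0`, so the
transport term is only `O(K |z - y|)` while `ν |Dφ| ≳ K ν c`: the residual of the equation
is positive. Hence `z ∉ Ω`, and at `z ∈ ∂Ω` the Dirichlet alternative gives `u z ≤ g z`.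
Letting `m → 0`, continuity of `g` yields `u y ≤ g y`.
-/

open Filter Topology Set Metric Bornology

noncomputable section

abbrev E2 : Type := EuclideanSpace ℝ (Fin 2)

/-- The Hamiltonian vector field `b = (∂H/∂x₂, −∂H/∂x₁)` of `H`. -/
def hamVF (H : E2 → ℝ) (x : E2) : E2 :=
  (WithLp.equiv 2 (Fin 2 → ℝ)).symm
    ![fderiv ℝ H x (EuclideanSpace.single 1 1), -(fderiv ℝ H x (EuclideanSpace.single 0 1))]

open scoped RealInnerProductSpace Gradient

theorem exists_contDiff_eqOn_ball {E F : Type*} [NormedAddCommGroup E] [NormedSpace ℝ E]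
    [HasContDiffBump E] [NormedAddCommGroup F] [NormedSpace ℝ F] {n : ℕ∞} {f : E → F}
    {V : Set E} (hV : IsOpen V) (hf : ContDiffOn ℝ n f V) {y : E} (hy : y ∈ V) :
    ∃ ρ > 0, ∃ G : E → F, ContDiff ℝ n G ∧ EqOn G f (ball y ρ) := by
  obtain ⟨R, hR, hRV⟩ := nhds_basis_closedBall.mem_iff.mp (hV.mem_nhds hy)
  let χ : ContDiffBump y := ⟨R / 2, R, half_pos hR, half_lt_self hR⟩
  refine ⟨R / 2, half_pos hR, fun x => χ x • f x, contDiff_iff_contDiffAt.mpr fun x => ?_,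
    fun x hx => by simp [χ.one_of_mem_closedBall (ball_subset_closedBall hx)]⟩
  by_cases hx : x ∈ V
  · exact χ.contDiffAt.smul (hf.contDiffAt (hV.mem_nhds hx))
  · have hχ : (χ : E → ℝ) =ᶠ[𝓝 x] 0 := by
      rw [← notMem_tsupport_iff_eventuallyEq, χ.tsupport_eq]
      exact fun h => hx (hRV h)
    refine (contDiffAt_const (c := (0 : F))).congr_of_eventuallyEq ?_
    filter_upwards [hχ] with x' hx'
    simp [hx']

theorem le_of_forall_lt_on_inter_closure {X : Type*} [TopologicalSpace X] {U s : Set X}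
    {f : X → ℝ} {a : ℝ} (hU : IsOpen U) (hf : ContinuousOn f (closure s))
    (h : ∀ x ∈ U ∩ s, f x < a) : ∀ x ∈ U ∩ closure s, f x ≤ a := fun x hx =>
  ContinuousWithinAt.closure_le (hU.inter_closure hx)
    ((hf x hx.2).mono (inter_subset_right.trans subset_closure)) continuousWithinAt_const
    fun x hx => (h x hx).le

theorem UpperSemicontinuousOn.exists_isLocalMaxOn_sub_near {α : Type*} [PseudoMetricSpace α]
    {A : Set α} {u φ : α → ℝ} {y : α} {m K C : ℝ} (hA : IsCompact A) (hy : y ∈ A)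
    (hu : UpperSemicontinuousOn u A) (hφ : Continuous φ) (hC : ∀ x ∈ A, |u x| ≤ C)
    (hφy : φ y = 0) (hφA : ∀ x ∈ A ∩ closedBall y m, K * dist x y ^ 2 ≤ φ x)
    (hm : 0 ≤ m) (hK : 2 * C < K * m ^ 2) :
    ∃ z ∈ A ∩ ball y m, u y ≤ u z ∧ IsLocalMaxOn (fun x => u x - φ x) A z := by
  have hS : IsCompact (A ∩ closedBall y m) := hA.inter_right isClosed_closedBall
  have hyS : y ∈ A ∩ closedBall y m := ⟨hy, mem_closedBall_self hm⟩
  have husc : UpperSemicontinuousOn (fun x => u x - φ x) (A ∩ closedBall y m) := by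
    simpa only [sub_eq_add_neg, Pi.neg_apply] using
      (hu.mono inter_subset_left).add
        (hφ.neg.continuousOn (s := A ∩ closedBall y m)).upperSemicontinuousOn
  obtain ⟨z, hzS, hzmax⟩ := husc.exists_isMaxOn ⟨y, hyS⟩ hS
  have hyz : u y ≤ u z - φ z := by simpa [hφy] using hzmax hyS
  have hK0 : 0 < K := by
    nlinarith [(abs_nonneg _).trans (hC y hy), sq_nonneg m]
  have hφz := hφA z hzS
  have hdist : dist z y < m := by
    have hCy := abs_le.mp (hC y hy)
    have hCz := abs_le.mp (hC z hzS.1)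
    by_contra! h
    nlinarith [pow_le_pow_left₀ hm h 2]
  refine ⟨z, ⟨hzS.1, hdist⟩, by nlinarith [sq_nonneg (dist z y)], ?_⟩
  filter_upwards [nhdsWithin_le_nhds (isOpen_ball.mem_nhds hdist), self_mem_nhdsWithin]
    with x hxball hxA
  exact hzmax ⟨hxA, ball_subset_closedBall hxball⟩

theorem ContinuousWithinAt.le_of_forall_exists_dist_lt {α : Type*} [PseudoMetricSpace α]
    {f : α → ℝ} {s : Set α} {y : α} {a : ℝ} (hf : ContinuousWithinAt f s y)
    (h : ∀ m > 0, ∃ z ∈ s, dist z y < m ∧ a ≤ f z) : a ≤ f y := by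
  have hy : y ∈ closure (s ∩ {z | a ≤ f z}) := Metric.mem_closure_iff.mpr fun m hm =>
    let ⟨z, hz, hzy, hfz⟩ := h m hm
    ⟨z, ⟨hz, hfz⟩, dist_comm y z ▸ hzy⟩
  exact ContinuousWithinAt.closure_le hy continuousWithinAt_const (hf.mono inter_subset_left)
    fun z hz => hz.2

section

variable {F : Type*} [NormedAddCommGroup F]

def penalty (K a : ℝ) (G : F → ℝ) (y x : F) : ℝ := K * (a - G x + ‖x - y‖ ^ 2)

theorem mul_dist_sq_le_penalty {K a : ℝ} {G : F → ℝ} {x y : F} (hK : 0 ≤ K) (hx : G x ≤ a) :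
    K * dist x y ^ 2 ≤ penalty K a G y x := by
  rw [penalty, dist_eq_norm]
  nlinarith

variable [InnerProductSpace ℝ F]

def pdeResidual (lam ep ν M : ℝ) (b : F) (t : ℝ) (p : F) : ℝ :=
  lam * t - ep⁻¹ * ⟪b, p⟫ + ν * ‖p‖ - M

theorem pdeResidual_pos {b q w : F} {lam ep ν M K B c ρ C t : ℝ} (hbq : ⟪b, q⟫ = 0)
    (hb : ‖b‖ ≤ B) (hq : c ≤ ‖q‖) (hw : ‖w‖ ≤ ρ) (hρ : 2 * ρ * (ν + ep⁻¹ * B) ≤ ν * c / 2)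
    (hK : lam * C + M < K * (ν * c / 2)) (ht : -C ≤ t) (hlam : 0 ≤ lam) (hep : 0 ≤ ep)
    (hν : 0 ≤ ν) (hK0 : 0 ≤ K) :
    0 < pdeResidual lam ep ν M b t (K • ((2 : ℝ) • w - q)) := by
  have hinner : ep⁻¹ * ⟪b, K • ((2 : ℝ) • w - q)⟫ ≤ K * (2 * ρ * (ep⁻¹ * B)) := by
    have hbw : ⟪b, w⟫ ≤ B * ρ := (real_inner_le_norm b w).trans
      (mul_le_mul hb hw (norm_nonneg _) ((norm_nonneg _).trans hb))
    rw [inner_smul_right, inner_sub_right, hbq, sub_zero, inner_smul_right]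
    have := inv_nonneg.mpr hep
    calc ep⁻¹ * (K * (2 * ⟪b, w⟫)) = K * 2 * (ep⁻¹ * ⟪b, w⟫) := by ring
      _ ≤ K * 2 * (ep⁻¹ * (B * ρ)) := by gcongr
      _ = _ := by ring
  have hnorm : K * (c - 2 * ρ) ≤ ‖K • ((2 : ℝ) • w - q)‖ := by
    rw [norm_smul, Real.norm_of_nonneg hK0, norm_sub_rev]
    gcongr
    calc c - 2 * ρ ≤ ‖q‖ - ‖(2 : ℝ) • w‖ := by
          rw [norm_smul, Real.norm_two]; linarith
      _ ≤ _ := norm_sub_norm_le _ _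
  have hνK : ν * (K * (c - 2 * ρ)) ≤ ν * ‖K • ((2 : ℝ) • w - q)‖ := by gcongr
  have hlamt : lam * -C ≤ lam * t := by gcongr
  have hKρ := mul_le_mul_of_nonneg_left hρ hK0
  unfold pdeResidual
  linarith

theorem contDiff_penalty {n : WithTop ℕ∞} {K a : ℝ} {G : F → ℝ} (hG : ContDiff ℝ n G) (y : F) :
    ContDiff ℝ n (penalty K a G y) :=
  contDiff_const.mul ((contDiff_const.sub hG).add ((contDiff_id.sub contDiff_const).norm_sq ℝ))

variable [CompleteSpace F]

theorem hasGradientAt_penalty {K a : ℝ} {G : F → ℝ} {G' x : F}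
    (hG : HasGradientAt G G' x) (y : F) :
    HasGradientAt (penalty K a G y) (K • ((2 : ℝ) • (x - y) - G')) x := by
  rw [hasGradientAt_iff_hasFDerivAt] at hG ⊢
  refine (((hG.const_sub a).add ((hasFDerivAt_id x).sub_const y).norm_sq).const_mul K)
    |>.congr_fderiv ?_
  ext v
  simp [mul_sub, neg_add_eq_sub]

theorem ContDiff.continuous_gradient {n : WithTop ℕ∞} {f : F → ℝ}
    (hf : ContDiff ℝ n f) (hn : n ≠ 0) : Continuous (∇ f) :=
  (InnerProductSpace.toDual ℝ F).symm.continuous.comp (hf.continuous_fderiv hn)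

end

theorem gradient_apply_eq_fderiv_single {ι : Type*} [Fintype ι] [DecidableEq ι]
    (f : EuclideanSpace ℝ ι → ℝ) (x : EuclideanSpace ℝ ι) (i : ι) :
    ∇ f x i = fderiv ℝ f x (EuclideanSpace.single i 1) := by
  rw [← inner_gradient_left, EuclideanSpace.inner_single_right]
  simp

theorem inner_hamVF_gradient (H : E2 → ℝ) (x : E2) : ⟪hamVF H x, ∇ H x⟫ = 0 := by
  rw [PiLp.inner_apply]
  simp [hamVF, Fin.sum_univ_two, gradient_apply_eq_fderiv_single, mul_comm]

theorem norm_hamVF (H : E2 → ℝ) (x : E2) : ‖hamVF H x‖ = ‖∇ H x‖ := by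
  simp [hamVF, EuclideanSpace.norm_eq, Fin.sum_univ_two, gradient_apply_eq_fderiv_single,
    add_comm]

theorem exists_penalty_pdeResidual_pos {Ω V : Set E2} {H : E2 → ℝ} (hV : IsOpen V)
    (hΩV : closure Ω ⊆ V) (hH : ContDiffOn ℝ 1 H V) {y : E2} (hy : y ∈ closure Ω) {r c : ℝ}
    (hr : 0 < r) (hc : 0 < c) (hlt : ∀ x ∈ ball y r ∩ Ω, H x < H y)
    (hgrad : ∀ x ∈ ball y r ∩ closure Ω, c ≤ ‖∇ H x‖) {lam ep ν M : ℝ} (hlam : 0 ≤ lam)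
    (hep : 0 ≤ ep) (hν : 0 < ν) :
    ∃ ρ > 0, ∃ G : E2 → ℝ, ContDiff ℝ 1 G ∧ G y = H y ∧
      (∀ x ∈ closure Ω ∩ closedBall y ρ, G x ≤ H y) ∧
      ∀ z ∈ closure Ω ∩ ball y ρ, ∀ K ≥ 0, ∀ t C : ℝ, -C ≤ t → lam * C + M < K * (ν * c / 2) →
        0 < pdeResidual lam ep ν M (hamVF H z) t (∇ (penalty K (H y) G y) z) := by
  obtain ⟨R, hR, G, hG, hGH⟩ := exists_contDiff_eqOn_ball hV hH (hΩV hy)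
  obtain ⟨B, hB⟩ := (isCompact_closedBall y R).exists_bound_of_continuousOn
    (hG.continuous_gradient one_ne_zero).continuousOn
  have hsmall : Tendsto (fun t => 2 * t * (ν + ep⁻¹ * B)) (𝓝[>] 0) (𝓝 0) :=
    ((continuous_const.mul continuous_id).mul continuous_const).tendsto' 0 0 (by simp)
      |>.mono_left nhdsWithin_le_nhds
  obtain ⟨ρ, hρB, hρ, hρRr⟩ :=
    ((hsmall.eventually (gt_mem_nhds (show 0 < ν * c / 2 by positivity))).and
      (Ioo_mem_nhdsGT (lt_min hR hr))).exists
  have hball : closedBall y ρ ⊆ ball y R ∩ ball y r := fun x hx =>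
    have := (mem_closedBall.mp hx).trans_lt hρRr
    ⟨this.trans_le (min_le_left _ _), this.trans_le (min_le_right _ _)⟩
  have hHle := le_of_forall_lt_on_inter_closure isOpen_ball (hH.continuousOn.mono hΩV) hlt
  refine ⟨ρ, hρ, G, hG, hGH (mem_ball_self hR), fun x hx => ?_, fun z hz K hK0 t C ht hK => ?_⟩
  · exact (hGH (hball hx.2).1).trans_le (hHle x ⟨(hball hx.2).2, hx.1⟩)
  obtain ⟨hzR, hzr⟩ := hball (ball_subset_closedBall hz.2)
  have hGHz : ∇ G z = ∇ H z := (hGH.eventuallyEq_of_mem (isOpen_ball.mem_nhds hzR)).gradient_eq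
  rw [(hasGradientAt_penalty (hG.differentiable one_ne_zero z).hasGradientAt y).gradient, hGHz]
  exact pdeResidual_pos (inner_hamVF_gradient H z)
    ((norm_hamVF H z).trans_le (hGHz ▸ hB z (ball_subset_closedBall hzR))) (hgrad z ⟨hzr, hz.1⟩)
    ((dist_eq_norm z y).symm.trans_le (mem_ball.mp hz.2).le) hρB.le hK ht hlam hep hν.le hK0

theorem boundary_inequality_classical_general
    (Ω : Set E2) (hΩopen : IsOpen Ω) (hΩbdd : IsBounded Ω)
    (H : E2 → ℝ) (hH : ∃ V : Set E2, IsOpen V ∧ closure Ω ⊆ V ∧ ContDiffOn ℝ 1 H V)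
    (lam ep ν M : ℝ) (hlam : 0 < lam) (hep : 0 < ep) (hν : 0 < ν)
    (g : E2 → ℝ) (hg : ContinuousOn g (frontier Ω))
    (u : E2 → ℝ) (hub : ∃ C : ℝ, ∀ x ∈ closure Ω, |u x| ≤ C)
    (hu : UpperSemicontinuousOn u (closure Ω))
    (husub : ∀ φ : E2 → ℝ, ContDiff ℝ 1 φ → ∀ z ∈ Ω,
      IsLocalMaxOn (fun x => u x - φ x) Ω z →
      lam * u z - ep⁻¹ * (inner ℝ (hamVF H z) (gradient φ z) : ℝ)
        + ν * ‖gradient φ z‖ - M ≤ 0)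
    (hubc : ∀ φ : E2 → ℝ, ContDiff ℝ 1 φ → ∀ z ∈ frontier Ω,
      IsLocalMaxOn (fun x => u x - φ x) (closure Ω) z →
      min (lam * u z - ep⁻¹ * (inner ℝ (hamVF H z) (gradient φ z) : ℝ)
          + ν * ‖gradient φ z‖ - M)
        (u z - g z) ≤ 0)
    (y : E2) (hy : y ∈ frontier Ω)
    (r : ℝ) (hr : 0 < r) (hbar : ℝ) (hyH : H y = hbar)
    (hlt : ∀ x ∈ ball y r ∩ Ω, H x < hbar)
    (hgrad : ∃ c : ℝ, 0 < c ∧ ∀ x ∈ ball y r ∩ closure Ω, c ≤ ‖gradient H x‖) :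
    u y ≤ g y := by
  subst hyH
  obtain ⟨V, hVo, hclV, hHV⟩ := hH
  obtain ⟨c, hc, hcgrad⟩ := hgrad
  obtain ⟨C, hC⟩ := hub
  have hyc : y ∈ closure Ω := frontier_subset_closure hy
  obtain ⟨ρ, hρ, G, hG, hGy, hGle, hres⟩ :=
    exists_penalty_pdeResidual_pos (M := M) hVo hclV hHV hyc hr hc hlt hcgrad hlam.le hep.le hν
  refine (hg y hy).le_of_forall_exists_dist_lt fun m hm => ?_
  obtain ⟨K, hK0, hKm, hKres⟩ :
      ∃ K : ℝ, 0 ≤ K ∧ 2 * C < K * min m ρ ^ 2 ∧ lam * C + M < K * (ν * c / 2) :=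
    ((eventually_ge_atTop 0).and
      (((tendsto_id.atTop_mul_const (by positivity)).eventually_gt_atTop _).and
        ((tendsto_id.atTop_mul_const (by positivity)).eventually_gt_atTop _))).exists
  have hφ := contDiff_penalty (K := K) (a := H y) hG y
  obtain ⟨z, ⟨hzΩ, hzm⟩, huz, hmax⟩ := hu.exists_isLocalMaxOn_sub_near hΩbdd.isCompact_closure
    hyc hφ.continuous hC (by simp [penalty, hGy])
    (fun x hx => mul_dist_sq_le_penalty hK0 (hGle x ⟨hx.1, closedBall_subset_closedBall
      (min_le_right _ _) hx.2⟩)) (le_min hm.le hρ.le) hKm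
  have hpos := hres z ⟨hzΩ, ball_subset_ball (min_le_right _ _) hzm⟩ K hK0 (u z) C
    (neg_le_of_abs_le (hC z hzΩ)) hKres
  by_cases hzΩ' : z ∈ Ω
  · exact absurd (husub _ hφ z hzΩ' (hmax.on_subset subset_closure)) hpos.not_ge
  · have hzfr : z ∈ frontier Ω := hΩopen.frontier_eq ▸ ⟨hzΩ, hzΩ'⟩
    exact ⟨z, hzfr, hzm.trans_le (min_le_left _ _), huz.trans
      (sub_nonpos.mp ((min_le_iff.mp (hubc _ hφ z hzfr hmax)).resolve_left hpos.not_ge))⟩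

/-- A bounded u.s.c. viscosity subsolution of
`λ u − ε⁻¹ b·Du + ν|Du| − M = 0` in `Ω` with the Dirichlet condition `u = g` on `∂Ω`
in the viscosity sense satisfies the boundary inequality `u(y) ≤ g(y)` classically at
every boundary point `y` near which `H < H(y)` inside `Ω` and `|DH|` is bounded below. -/
theorem boundary_inequality_classical
    (Ω : Set E2) (hΩopen : IsOpen Ω) (hΩbdd : IsBounded Ω)
    (H : E2 → ℝ) (hH : ∃ V : Set E2, IsOpen V ∧ closure Ω ⊆ V ∧ ContDiffOn ℝ 1 H V)
    (lam ep ν M : ℝ) (hlam : 0 < lam) (hep : 0 < ep) (hν : 0 < ν) (hM : 0 ≤ M)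
    (g : E2 → ℝ) (hg : ContinuousOn g (frontier Ω))
    (u : E2 → ℝ) (hub : ∃ C : ℝ, ∀ x ∈ closure Ω, |u x| ≤ C)
    (hu : UpperSemicontinuousOn u (closure Ω))
    (husub : ∀ φ : E2 → ℝ, ContDiff ℝ 1 φ → ∀ z ∈ Ω,
      IsLocalMaxOn (fun x => u x - φ x) Ω z →
      lam * u z - ep⁻¹ * (inner ℝ (hamVF H z) (gradient φ z) : ℝ)
        + ν * ‖gradient φ z‖ - M ≤ 0)
    (hubc : ∀ φ : E2 → ℝ, ContDiff ℝ 1 φ → ∀ z ∈ frontier Ω,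
      IsLocalMaxOn (fun x => u x - φ x) (closure Ω) z →
      min (lam * u z - ep⁻¹ * (inner ℝ (hamVF H z) (gradient φ z) : ℝ)
          + ν * ‖gradient φ z‖ - M)
        (u z - g z) ≤ 0)
    (y : E2) (hy : y ∈ frontier Ω)
    (r : ℝ) (hr : 0 < r) (hbar : ℝ) (hyH : H y = hbar)
    (hlt : ∀ x ∈ ball y r ∩ Ω, H x < hbar)
    (hgrad : ∃ c : ℝ, 0 < c ∧ ∀ x ∈ ball y r ∩ closure Ω, c ≤ ‖gradient H x‖) :
    u y ≤ g y :=
  boundary_inequality_classical_general Ω hΩopen hΩbdd H hH lam ep ν M hlam hep hν g hg u hub hu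
    husub hubc y hy r hr hbar hyH hlt hgrad
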